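/- For the SE(3) coordinated rotation: given pairwise distinct points p_1,…,p_n ∈ ℝ³, rotations R_i ∈ SO(3), and a unit vector e ∈ ℝ³, the velocities ṗ_k = e × p_k, ω_k = e for all k satisfy, for every edge (i,j): d_ij R_iᵀ P(p̄_ij)(ṗ_j − ṗ_i) + R_iᵀ [p̄_ij]ₓ ω_i = 0. -/
import Mathlib


open Matrix BigOperators

/-- Orthogonal projection matrix `P(x) = I - (x xᵀ)/‖x‖²`. -/
noncomputable def proj (d : ℕ) (x : Fin d → ℝ) : Matrix (Fin d) (Fin d) ℝ :=
  1 - (∑ i, x i ^ 2)⁻¹ • Matrix.of (fun i j => x i * x j)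

/-- Skew-symmetric cross-product matrix `[x]ₓ`. -/
def skew3 (x : Fin 3 → ℝ) : Matrix (Fin 3) (Fin 3) ℝ :=
  !![0, -x 2, x 1; x 2, 0, -x 0; -x 1, x 0, 0]

lemma proj_cross (u e : Fin 3 → ℝ) :
    (proj 3 u).mulVec ((skew3 e).mulVec u) = (skew3 e).mulVec u := by
  have h0 : (Matrix.of fun a b => u a * u b).mulVec ((skew3 e).mulVec u) = 0 := by
    funext k
    fin_cases k <;>
      simp [skew3, mulVec, dotProduct, Fin.sum_univ_succ] <;> ring
  rw [proj, Matrix.sub_mulVec, Matrix.one_mulVec, Matrix.smul_mulVec, h0,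
    smul_zero, sub_zero]

lemma skew_smul_apply (s : ℝ) (u e : Fin 3 → ℝ) :
    (skew3 (s • u)).mulVec e = -(s • ((skew3 e).mulVec u)) := by
  funext k
  fin_cases k <;>
    simp [skew3, mulVec, dotProduct, Fin.sum_univ_succ] <;> ring

theorem se3_coordinated_rotation (n : ℕ) (p : Fin n → Fin 3 → ℝ)
    (hp : Function.Injective p) (R : Fin n → Matrix (Fin 3) (Fin 3) ℝ)
    (hR : ∀ k, (R k)ᵀ * R k = 1 ∧ (R k).det = 1)
    (e : Fin 3 → ℝ) (he : ∑ i, e i ^ 2 = 1)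
    (pdot : Fin n → Fin 3 → ℝ) (hpdot : ∀ k, pdot k = (skew3 e).mulVec (p k))
    (ω : Fin n → Fin 3 → ℝ) (hω : ∀ k, ω k = e)
    (i j : Fin n) (hij : i ≠ j) :
    (Real.sqrt (∑ k, (p j k - p i k) ^ 2))⁻¹ •
        (R i)ᵀ.mulVec ((proj 3 (p j - p i)).mulVec (pdot j - pdot i)) +
      (R i)ᵀ.mulVec
        ((skew3 ((Real.sqrt (∑ k, (p j k - p i k) ^ 2))⁻¹ • (p j - p i))).mulVec (ω i)) = 0 := by
  have hsub : pdot j - pdot i = (skew3 e).mulVec (p j - p i) := by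
    rw [hpdot, hpdot, Matrix.mulVec_sub]
  rw [hsub, hω, proj_cross, skew_smul_apply, Matrix.mulVec_neg, Matrix.mulVec_smul,
    add_neg_cancel]
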